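/- Let v, w ∈ ℝ³ be linearly independent. For parameters α > 0, β, γ with 4αγ − β² > 0 write F_{α,β,γ}(η) = (1/√α) · ln( 2√α·√(γ + βη + αη²) + 2αη + β ). Then with (α₁,β₁,γ₁) = (|v|², 2 v·w, |w|²), (α₂,β₂,γ₂) = (|w|², 2 v·w, |v|²), (α₃,β₃,γ₃) = (|v+w|², −2 (v+w)·w, |w|²), one has the closed formula ∫_{π×π} 1/|(x₁−y₁)v + (x₂−y₂)w| d(x,y) = (1/3) Σ_{i=1}^{3} ( F_{αᵢ,βᵢ,γᵢ}(1) − F_{αᵢ,βᵢ,γᵢ}(0) ). -/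

import Mathlib

open MeasureTheory Set
open scoped RealInnerProductSpace

/-- The open reference triangle `π = {(x₁,x₂) : 0 < x₂ < x₁ < 1} ⊂ ℝ²`. -/
def refTri : Set (ℝ × ℝ) := {p | 0 < p.2 ∧ p.2 < p.1 ∧ p.1 < 1}

/-- The antiderivative `F_{α,β,γ}(η) = (1/√α)·ln(2√α·√(γ + βη + αη²) + 2αη + β)`. -/
noncomputable def Fanti (α β γ η : ℝ) : ℝ :=
  (1 / Real.sqrt α) *
    Real.log (2 * Real.sqrt α * Real.sqrt (γ + β * η + α * η ^ 2) + 2 * α * η + β)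

open scoped ENNReal

section SLPAux

lemma Qpos {α β γ : ℝ} (hα : 0 < α) (hd : β ^ 2 < 4 * α * γ) (η : ℝ) :
    0 < γ + β * η + α * η ^ 2 := by
  nlinarith [sq_nonneg (2 * α * η + β), sq_nonneg η]

lemma Dpos {α β γ : ℝ} (hα : 0 < α) (hd : β ^ 2 < 4 * α * γ) (η : ℝ) :
    0 < 2 * Real.sqrt α * Real.sqrt (γ + β * η + α * η ^ 2) + 2 * α * η + β := by
  have hQ := Qpos hα hd η
  have h1 : Real.sqrt α * Real.sqrt (γ + β * η + α * η ^ 2)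
      = Real.sqrt (α * (γ + β * η + α * η ^ 2)) := (Real.sqrt_mul hα.le _).symm
  set t := Real.sqrt (α * (γ + β * η + α * η ^ 2)) with ht
  have htn : 0 ≤ t := Real.sqrt_nonneg _
  have ht2 : t ^ 2 = α * (γ + β * η + α * η ^ 2) := Real.sq_sqrt (by positivity)
  rw [mul_assoc, h1]
  nlinarith [sq_nonneg (2 * t + 2 * α * η + β), sq_nonneg (2 * t - 2 * α * η - β)]

lemma hasDerivAt_Fanti {α β γ : ℝ} (hα : 0 < α) (hd : β ^ 2 < 4 * α * γ) (η : ℝ) :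
    HasDerivAt (Fanti α β γ) (1 / Real.sqrt (γ + β * η + α * η ^ 2)) η := by
  have hQ := Qpos hα hd η
  have hsQ : 0 < Real.sqrt (γ + β * η + α * η ^ 2) := Real.sqrt_pos.2 hQ
  have hsα : 0 < Real.sqrt α := Real.sqrt_pos.2 hα
  have hD := Dpos hα hd η
  have hq : HasDerivAt (fun η : ℝ => γ + β * η + α * η ^ 2) (β + 2 * α * η) η := by
    have := ((hasDerivAt_id η).const_mul β).const_add γ
    have h2 : HasDerivAt (fun η : ℝ => α * η ^ 2) (α * (2 * η)) η :=
      ((hasDerivAt_pow 2 η).const_mul α).congr_deriv (by ring)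
    exact (this.add h2).congr_deriv (by ring)
  have hsqrt : HasDerivAt (fun η : ℝ => Real.sqrt (γ + β * η + α * η ^ 2))
      ((β + 2 * α * η) / (2 * Real.sqrt (γ + β * η + α * η ^ 2))) η := by
    have := (Real.hasDerivAt_sqrt hQ.ne').comp η hq
    exact this.congr_deriv (by ring)
  have hin : HasDerivAt (fun η : ℝ =>
      2 * Real.sqrt α * Real.sqrt (γ + β * η + α * η ^ 2) + 2 * α * η + β)
      (2 * Real.sqrt α * ((β + 2 * α * η) / (2 * Real.sqrt (γ + β * η + α * η ^ 2)))
        + 2 * α) η := by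
    have h1 := hsqrt.const_mul (2 * Real.sqrt α)
    have h2 : HasDerivAt (fun η : ℝ => 2 * α * η) (2 * α) η :=
      ((hasDerivAt_id η).const_mul (2 * α)).congr_deriv (by ring)
    exact ((h1.add h2).add_const β).congr_deriv (by ring)
  have hlog := (Real.hasDerivAt_log hD.ne').comp η hin
  have := hlog.const_mul (1 / Real.sqrt α)
  refine this.congr_deriv ?_
  have hαα : Real.sqrt α * Real.sqrt α = α := Real.mul_self_sqrt hα.le
  have hQQ : Real.sqrt (γ + β * η + α * η ^ 2) * Real.sqrt (γ + β * η + α * η ^ 2)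
      = γ + β * η + α * η ^ 2 := Real.mul_self_sqrt hQ.le
  generalize Real.sqrt (γ + β * η + α * η ^ 2) = s at *
  generalize Real.sqrt α = a at *
  subst hαα
  have key : 2 * a * ((β + 2 * (a * a) * η) / (2 * s)) + 2 * (a * a)
      = a * (2 * a * s + 2 * (a * a) * η + β) / s := by
    field_simp
    ring
  have hD0 := hD.ne'
  rw [key]
  field_simp
  exact div_self (by intro h0; apply hD0; linarith)

lemma cont_one_div_sqrtQ {α β γ : ℝ} (hα : 0 < α) (hd : β ^ 2 < 4 * α * γ) :
    Continuous (fun η : ℝ => 1 / Real.sqrt (γ + β * η + α * η ^ 2)) := by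
  apply Continuous.div continuous_const
  · exact (Real.continuous_sqrt.comp (by continuity))
  · intro η
    exact (Real.sqrt_pos.2 (Qpos hα hd η)).ne'

lemma lintegral_one_div_sqrtQ {α β γ : ℝ} (hα : 0 < α) (hd : β ^ 2 < 4 * α * γ) :
    ∫⁻ η in Ioo (0:ℝ) 1, ENNReal.ofReal (1 / Real.sqrt (γ + β * η + α * η ^ 2))
      = ENNReal.ofReal (Fanti α β γ 1 - Fanti α β γ 0) := by
  have hc := cont_one_div_sqrtQ hα hd
  have hint : IntegrableOn (fun η : ℝ => 1 / Real.sqrt (γ + β * η + α * η ^ 2))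
      (Ioo 0 1) volume :=
    (hc.integrableOn_Icc (a := 0) (b := 1)).mono_set Ioo_subset_Icc_self
  rw [← ofReal_integral_eq_lintegral_ofReal hint]
  · congr 1
    have h1 : ∫ η in Ioo (0:ℝ) 1, 1 / Real.sqrt (γ + β * η + α * η ^ 2)
        = ∫ η in (0:ℝ)..1, 1 / Real.sqrt (γ + β * η + α * η ^ 2) := by
      rw [intervalIntegral.integral_of_le (by norm_num), MeasureTheory.integral_Ioc_eq_integral_Ioo]
    rw [h1]
    exact intervalIntegral.integral_eq_sub_of_hasDerivAt
      (fun η _ => hasDerivAt_Fanti hα hd η) (hc.intervalIntegrable 0 1)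
  · filter_upwards with η
    positivity



lemma Fanti_sub_nonneg {α β γ : ℝ} (hα : 0 < α) (hd : β ^ 2 < 4 * α * γ) :
    0 ≤ Fanti α β γ 1 - Fanti α β γ 0 := by
  rw [← intervalIntegral.integral_eq_sub_of_hasDerivAt
    (fun η _ => hasDerivAt_Fanti hα hd η) ((cont_one_div_sqrtQ hα hd).intervalIntegrable 0 1)]
  apply intervalIntegral.integral_nonneg (by norm_num)
  intro x _
  positivity

lemma lintegral_Iio_ofReal (l c : ℝ) :
    ∫⁻ x in Iio c, ENNReal.ofReal (x - l) = ENNReal.ofReal ((max (c - l) 0) ^ 2 / 2) := by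
  rcases le_or_gt c l with hcl | hlc
  · have h0 : ∀ x ∈ Iio c, ENNReal.ofReal (x - l) = 0 := by
      intro x hx
      simp only [mem_Iio] at hx
      exact ENNReal.ofReal_eq_zero.2 (by linarith)
    rw [setLIntegral_congr_fun measurableSet_Iio h0]
    simp [max_eq_right (by linarith : c - l ≤ 0)]
  · have hsplit : Iio c = Iic l ∪ Ioo l c := by
      ext x; simp only [mem_Iio, mem_union, mem_Iic, mem_Ioo]
      constructor
      · intro hx; rcases le_or_gt x l with h | h
        · exact Or.inl h
        · exact Or.inr ⟨h, hx⟩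
      · rintro (h | ⟨_, h⟩) <;> linarith
    have hdisj : Disjoint (Iic l) (Ioo l c) := by
      rw [Set.disjoint_left]
      intro x hx hx2
      rw [mem_Iic] at hx
      rw [mem_Ioo] at hx2
      linarith [hx2.1]
    rw [hsplit, lintegral_union measurableSet_Ioo hdisj]
    have h1 : ∫⁻ x in Iic l, ENNReal.ofReal (x - l) = 0 := by
      have hz : ∀ x ∈ Iic l, ENNReal.ofReal (x - l) = (0 : ℝ≥0∞) := by
        intro x hx
        rw [mem_Iic] at hx
        exact ENNReal.ofReal_eq_zero.2 (by linarith)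
      rw [setLIntegral_congr_fun measurableSet_Iic hz]
      simp
    have hint : IntegrableOn (fun x : ℝ => x - l) (Ioo l c) volume :=
      ((continuous_id.sub continuous_const).integrableOn_Icc (a := l) (b := c)).mono_set
        Ioo_subset_Icc_self
    have h2 : ∫⁻ x in Ioo l c, ENNReal.ofReal (x - l)
        = ENNReal.ofReal (∫ x in Ioo l c, (x - l)) := by
      rw [ofReal_integral_eq_lintegral_ofReal hint]
      filter_upwards [ae_restrict_mem measurableSet_Ioo] with x hx
      simp only [mem_Ioo] at hx
      simp only [Pi.zero_apply]
      linarith [hx.1]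
    have h3 : ∫ x in Ioo l c, (x - l) = (c - l) ^ 2 / 2 := by
      rw [← MeasureTheory.integral_Ioc_eq_integral_Ioo,
        ← intervalIntegral.integral_of_le hlc.le]
      rw [intervalIntegral.integral_sub intervalIntegral.intervalIntegrable_id
        (intervalIntegrable_const (c := l)), integral_id,
        intervalIntegral.integral_const, smul_eq_mul]
      ring
    rw [h1, h2, h3, zero_add, max_eq_left (by nlinarith : (0:ℝ) ≤ c - l)]

lemma vol_tri (a b c : ℝ) :
    volume {p : ℝ × ℝ | a < p.2 ∧ p.2 < p.1 - b ∧ p.1 < c}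
      = ENNReal.ofReal ((max (c - a - b) 0) ^ 2 / 2) := by
  have hE : MeasurableSet {p : ℝ × ℝ | a < p.2 ∧ p.2 < p.1 - b ∧ p.1 < c} := by
    apply MeasurableSet.inter
    · exact measurable_snd measurableSet_Ioi
    · apply MeasurableSet.inter
      · exact measurableSet_lt measurable_snd (measurable_fst.sub measurable_const)
      · exact measurable_fst measurableSet_Iio
  rw [MeasureTheory.Measure.volume_eq_prod ℝ ℝ, Measure.prod_apply hE]
  have hsec : ∀ x : ℝ, volume (Prod.mk x ⁻¹' {p : ℝ × ℝ | a < p.2 ∧ p.2 < p.1 - b ∧ p.1 < c})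
      = (Iio c).indicator (fun x => ENNReal.ofReal (x - (a + b))) x := by
    intro x
    by_cases hx : x < c
    · have : Prod.mk x ⁻¹' {p : ℝ × ℝ | a < p.2 ∧ p.2 < p.1 - b ∧ p.1 < c} = Ioo a (x - b) := by
        ext y; simp [hx, and_comm]
      rw [this, Real.volume_Ioo, indicator_of_mem (mem_Iio.2 hx)]
      congr 1; ring
    · have : Prod.mk x ⁻¹' {p : ℝ × ℝ | a < p.2 ∧ p.2 < p.1 - b ∧ p.1 < c} = ∅ := by
        ext y; simp [hx]
      rw [this, indicator_of_notMem (by simpa using hx)]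
      simp
  simp_rw [hsec]
  rw [lintegral_indicator measurableSet_Iio, lintegral_Iio_ofReal (a + b) c]
  congr 2
  ring

lemma refTri_inter (z : ℝ × ℝ) :
    refTri ∩ {x : ℝ × ℝ | x - z ∈ refTri}
      = {p : ℝ × ℝ | max 0 z.2 < p.2 ∧ p.2 < p.1 - max 0 (z.1 - z.2) ∧ p.1 < 1 + min 0 z.1} := by
  ext p
  simp only [refTri, mem_inter_iff, mem_setOf_eq, Prod.fst_sub, Prod.snd_sub,
    max_lt_iff, lt_min_iff]
  constructor
  · rintro ⟨⟨h1, h2, h3⟩, ⟨h4, h5, h6⟩⟩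
    refine ⟨⟨h1, by linarith⟩, ?_, ?_⟩
    · have : max 0 (z.1 - z.2) < p.1 - p.2 := max_lt (by linarith) (by linarith)
      linarith
    · rcases min_cases 0 z.1 with ⟨he, _⟩ | ⟨he, _⟩ <;> rw [he] <;> linarith
  · rintro ⟨⟨h1, h2⟩, h3, h4⟩
    have hb1 : (0:ℝ) ≤ max 0 (z.1 - z.2) := le_max_left _ _
    have hb2 : z.1 - z.2 ≤ max 0 (z.1 - z.2) := le_max_right _ _
    have hm1 : min 0 z.1 ≤ 0 := min_le_left _ _
    have hm2 : min 0 z.1 ≤ z.1 := min_le_right _ _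
    exact ⟨⟨h1, by linarith, by linarith⟩, ⟨by linarith, by linarith, by linarith⟩⟩

lemma vol_K (z : ℝ × ℝ) :
    volume (refTri ∩ {x : ℝ × ℝ | x - z ∈ refTri})
      = ENNReal.ofReal
          ((max (1 + min 0 z.1 - max 0 z.2 - max 0 (z.1 - z.2)) 0) ^ 2 / 2) := by
  rw [refTri_inter, vol_tri]

def Phi (A B p : ℝ × ℝ) : ℝ × ℝ :=
  (p.1 * A.1 + p.1 * p.2 * B.1, p.1 * A.2 + p.1 * p.2 * B.2)

noncomputable def dPhi (A B p : ℝ × ℝ) : ℝ × ℝ →L[ℝ] ℝ × ℝ :=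
  (((A.1 + p.2 * B.1) • ContinuousLinearMap.fst ℝ ℝ ℝ
      + (p.1 * B.1) • ContinuousLinearMap.snd ℝ ℝ ℝ).prod
    ((A.2 + p.2 * B.2) • ContinuousLinearMap.fst ℝ ℝ ℝ
      + (p.1 * B.2) • ContinuousLinearMap.snd ℝ ℝ ℝ))

lemma hasFDerivAt_Phi (A B p : ℝ × ℝ) : HasFDerivAt (Phi A B) (dPhi A B p) p := by
  have hmul : HasFDerivAt (fun p : ℝ × ℝ => p.1 * p.2)
      (p.1 • ContinuousLinearMap.snd ℝ ℝ ℝ + p.2 • ContinuousLinearMap.fst ℝ ℝ ℝ) p :=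
    hasFDerivAt_fst.mul hasFDerivAt_snd
  have h1 : HasFDerivAt (fun p : ℝ × ℝ => p.1 * A.1 + p.1 * p.2 * B.1)
      (A.1 • ContinuousLinearMap.fst ℝ ℝ ℝ
        + B.1 • (p.1 • ContinuousLinearMap.snd ℝ ℝ ℝ + p.2 • ContinuousLinearMap.fst ℝ ℝ ℝ)) p := by
    have hf : HasFDerivAt (fun p : ℝ × ℝ => p.1) (ContinuousLinearMap.fst ℝ ℝ ℝ) p :=
      hasFDerivAt_fst
    have := hf.mul_const A.1
    have h2 := hmul.mul_const B.1
    exact (this.add h2).congr_fderiv (by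
      ext q <;> simp [ContinuousLinearMap.smul_apply] <;> ring)
  have h2 : HasFDerivAt (fun p : ℝ × ℝ => p.1 * A.2 + p.1 * p.2 * B.2)
      (A.2 • ContinuousLinearMap.fst ℝ ℝ ℝ
        + B.2 • (p.1 • ContinuousLinearMap.snd ℝ ℝ ℝ + p.2 • ContinuousLinearMap.fst ℝ ℝ ℝ)) p := by
    have hf : HasFDerivAt (fun p : ℝ × ℝ => p.1) (ContinuousLinearMap.fst ℝ ℝ ℝ) p :=
      hasFDerivAt_fst
    have := hf.mul_const A.2
    have h2 := hmul.mul_const B.2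
    exact (this.add h2).congr_fderiv (by
      ext q <;> simp [ContinuousLinearMap.smul_apply] <;> ring)
  exact (h1.prodMk h2).congr_fderiv (by
    ext q <;> simp [dPhi, ContinuousLinearMap.smul_apply] <;> ring)

lemma det_eq_pairs (L : ℝ × ℝ →ₗ[ℝ] ℝ × ℝ) :
    LinearMap.det L = (L (1, 0)).1 * (L (0, 1)).2 - (L (0, 1)).1 * (L (1, 0)).2 := by
  rw [← LinearMap.det_toMatrix (Module.Basis.finTwoProd ℝ), Matrix.det_fin_two]
  simp [LinearMap.toMatrix_apply, Module.Basis.coe_finTwoProd_repr, Module.Basis.finTwoProd_zero,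
    Module.Basis.finTwoProd_one]

lemma det_dPhi (A B p : ℝ × ℝ) :
    (dPhi A B p).det = p.1 * (A.1 * B.2 - A.2 * B.1) := by
  have := det_eq_pairs (dPhi A B p).toLinearMap
  rw [show (dPhi A B p).det = LinearMap.det (dPhi A B p).toLinearMap from rfl, this]
  simp [dPhi, ContinuousLinearMap.smul_apply]
  ring

lemma injOn_Phi {A B : ℝ × ℝ} (hd : A.1 * B.2 - A.2 * B.1 ≠ 0) :
    InjOn (Phi A B) (Ioi (0:ℝ) ×ˢ Ioo (0:ℝ) 1) := by
  rintro p ⟨hp1, _⟩ q ⟨hq1, _⟩ heq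
  simp only [mem_Ioi] at hp1 hq1
  have e1 : p.1 * A.1 + p.1 * p.2 * B.1 = q.1 * A.1 + q.1 * q.2 * B.1 := congrArg Prod.fst heq
  have e2 : p.1 * A.2 + p.1 * p.2 * B.2 = q.1 * A.2 + q.1 * q.2 * B.2 := congrArg Prod.snd heq
  have hu : (p.1 - q.1) * (A.1 * B.2 - A.2 * B.1) = 0 := by linear_combination B.2 * e1 - B.1 * e2
  have ht : (p.1 * p.2 - q.1 * q.2) * (A.1 * B.2 - A.2 * B.1) = 0 := by
    linear_combination A.1 * e2 - A.2 * e1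
  have h1 : p.1 = q.1 := by
    have := mul_eq_zero.1 hu
    rcases this with h | h
    · linarith
    · exact absurd h hd
  have h2 : p.1 * p.2 = q.1 * q.2 := by
    have := mul_eq_zero.1 ht
    rcases this with h | h
    · linarith
    · exact absurd h hd
  have : p.2 = q.2 := by
    rw [h1] at h2
    exact mul_left_cancel₀ (ne_of_gt hq1) h2
  exact Prod.ext h1 this

lemma cone_cov {A B : ℝ × ℝ} (hdet : A.1 * B.2 - A.2 * B.1 = 1 ∨ A.1 * B.2 - A.2 * B.1 = -1)
    (f : ℝ × ℝ → ℝ≥0∞) :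
    ∫⁻ z in Phi A B '' (Ioi (0:ℝ) ×ˢ Ioo (0:ℝ) 1), f z
      = ∫⁻ p in (Ioi (0:ℝ) ×ˢ Ioo (0:ℝ) 1 : Set (ℝ × ℝ)), ENNReal.ofReal p.1 * f (Phi A B p) := by
  have hd0 : A.1 * B.2 - A.2 * B.1 ≠ 0 := by rcases hdet with h | h <;> rw [h] <;> norm_num
  have hs : MeasurableSet (Ioi (0:ℝ) ×ˢ Ioo (0:ℝ) 1) := measurableSet_Ioi.prod measurableSet_Ioo
  rw [MeasureTheory.lintegral_image_eq_lintegral_abs_det_fderiv_mul volume hs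
    (fun p _ => (hasFDerivAt_Phi A B p).hasFDerivWithinAt) (injOn_Phi hd0) f]
  apply setLIntegral_congr_fun hs
  intro p hp
  rcases hp with ⟨hp1, _⟩
  simp only [mem_Ioi] at hp1
  beta_reduce
  congr 2
  rw [det_dPhi]
  rcases hdet with h | h <;> rw [h] <;> simp [abs_of_pos hp1]

def O1 : Set (ℝ × ℝ) := {z | 0 < z.2 ∧ z.2 < z.1}
def O2 : Set (ℝ × ℝ) := {z | 0 < z.1 ∧ z.1 < z.2}
def O3 : Set (ℝ × ℝ) := {z | z.1 < 0 ∧ 0 < z.2}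
def O4 : Set (ℝ × ℝ) := {z | z.1 < z.2 ∧ z.2 < 0}
def O5 : Set (ℝ × ℝ) := {z | z.2 < z.1 ∧ z.1 < 0}
def O6 : Set (ℝ × ℝ) := {z | z.2 < 0 ∧ 0 < z.1}

lemma imageO1 : Phi (1,0) (0,1) '' (Ioi (0:ℝ) ×ˢ Ioo (0:ℝ) 1) = O1 := by
  ext z
  constructor
  · rintro ⟨p, hp, rfl⟩
    simp only [mem_prod, mem_Ioi, mem_Ioo] at hp
    obtain ⟨h1, h2, h3⟩ := hp
    exact ⟨by simp only [Phi]; nlinarith, by simp only [Phi]; nlinarith⟩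
  · rintro ⟨h1, h2⟩
    have hz1 : z.1 ≠ 0 := by linarith
    refine ⟨(z.1, z.2 / z.1), ?_, ?_⟩
    · simp only [mem_prod, mem_Ioi, mem_Ioo]
      exact ⟨by linarith, div_pos h1 (by linarith), (div_lt_one (by linarith)).2 h2⟩
    · simp only [Phi]
      exact Prod.ext (by ring) (by field_simp; ring)

lemma imageO2 : Phi (0,1) (1,0) '' (Ioi (0:ℝ) ×ˢ Ioo (0:ℝ) 1) = O2 := by
  ext z
  constructor
  · rintro ⟨p, hp, rfl⟩
    simp only [mem_prod, mem_Ioi, mem_Ioo] at hp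
    obtain ⟨h1, h2, h3⟩ := hp
    exact ⟨by simp only [Phi]; nlinarith, by simp only [Phi]; nlinarith⟩
  · rintro ⟨h1, h2⟩
    have hz2 : z.2 ≠ 0 := by linarith
    refine ⟨(z.2, z.1 / z.2), ?_, ?_⟩
    · simp only [mem_prod, mem_Ioi, mem_Ioo]
      exact ⟨by linarith, div_pos h1 (by linarith), (div_lt_one (by linarith)).2 h2⟩
    · simp only [Phi]
      exact Prod.ext (by field_simp; ring) (by ring)

lemma imageO3 : Phi (0,1) (-1,-1) '' (Ioi (0:ℝ) ×ˢ Ioo (0:ℝ) 1) = O3 := by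
  ext z
  constructor
  · rintro ⟨p, hp, rfl⟩
    simp only [mem_prod, mem_Ioi, mem_Ioo] at hp
    obtain ⟨h1, h2, h3⟩ := hp
    exact ⟨by simp only [Phi]; nlinarith, by simp only [Phi]; nlinarith⟩
  · rintro ⟨h1, h2⟩
    have hd : (0:ℝ) < z.2 - z.1 := by linarith
    have hd' : z.2 - z.1 ≠ 0 := ne_of_gt hd
    refine ⟨(z.2 - z.1, -z.1 / (z.2 - z.1)), ?_, ?_⟩
    · simp only [mem_prod, mem_Ioi, mem_Ioo]
      exact ⟨hd, div_pos (by linarith) hd, (div_lt_one hd).2 (by linarith)⟩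
    · simp only [Phi]
      refine Prod.ext (by field_simp; ring) ?_
      first
      | (field_simp; ring)
      | field_simp

lemma imageO4 : Phi (-1,0) (0,-1) '' (Ioi (0:ℝ) ×ˢ Ioo (0:ℝ) 1) = O4 := by
  ext z
  constructor
  · rintro ⟨p, hp, rfl⟩
    simp only [mem_prod, mem_Ioi, mem_Ioo] at hp
    obtain ⟨h1, h2, h3⟩ := hp
    exact ⟨by simp only [Phi]; nlinarith, by simp only [Phi]; nlinarith⟩
  · rintro ⟨h1, h2⟩
    have hz1 : z.1 ≠ 0 := by linarith
    refine ⟨(-z.1, z.2 / z.1), ?_, ?_⟩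
    · simp only [mem_prod, mem_Ioi, mem_Ioo]
      refine ⟨by linarith, div_pos_of_neg_of_neg (by linarith) (by linarith), ?_⟩
      rw [div_lt_one_of_neg (by linarith : z.1 < 0)]
      linarith
    · simp only [Phi]
      exact Prod.ext (by ring) (by field_simp; ring)

lemma imageO5 : Phi (0,-1) (-1,0) '' (Ioi (0:ℝ) ×ˢ Ioo (0:ℝ) 1) = O5 := by
  ext z
  constructor
  · rintro ⟨p, hp, rfl⟩
    simp only [mem_prod, mem_Ioi, mem_Ioo] at hp
    obtain ⟨h1, h2, h3⟩ := hp
    exact ⟨by simp only [Phi]; nlinarith, by simp only [Phi]; nlinarith⟩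
  · rintro ⟨h1, h2⟩
    have hz2 : z.2 ≠ 0 := by linarith
    refine ⟨(-z.2, z.1 / z.2), ?_, ?_⟩
    · simp only [mem_prod, mem_Ioi, mem_Ioo]
      refine ⟨by linarith, div_pos_of_neg_of_neg (by linarith) (by linarith), ?_⟩
      rw [div_lt_one_of_neg (by linarith : z.2 < 0)]
      linarith
    · simp only [Phi]
      exact Prod.ext (by field_simp; ring) (by ring)

lemma imageO6 : Phi (0,-1) (1,1) '' (Ioi (0:ℝ) ×ˢ Ioo (0:ℝ) 1) = O6 := by
  ext z
  constructor
  · rintro ⟨p, hp, rfl⟩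
    simp only [mem_prod, mem_Ioi, mem_Ioo] at hp
    obtain ⟨h1, h2, h3⟩ := hp
    exact ⟨by simp only [Phi]; nlinarith, by simp only [Phi]; nlinarith⟩
  · rintro ⟨h1, h2⟩
    have hd : (0:ℝ) < z.1 - z.2 := by linarith
    have hd' : z.1 - z.2 ≠ 0 := ne_of_gt hd
    refine ⟨(z.1 - z.2, z.1 / (z.1 - z.2)), ?_, ?_⟩
    · simp only [mem_prod, mem_Ioi, mem_Ioo]
      exact ⟨hd, by positivity, (div_lt_one hd).2 (by linarith)⟩
    · simp only [Phi]
      refine Prod.ext (by field_simp; ring) ?_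
      first
      | (field_simp; ring)
      | field_simp

lemma cover_ae : (O1 ∪ O2 ∪ O3 ∪ O4 ∪ O5 ∪ O6 : Set (ℝ × ℝ)) =ᵐ[volume] univ := by
  rw [Filter.eventuallyEq_set]
  have hnull : volume ({z : ℝ × ℝ | z.1 = 0} ∪ {z : ℝ × ℝ | z.2 = 0}
      ∪ {z : ℝ × ℝ | z.1 = z.2}) = 0 := by
    refine measure_union_null (measure_union_null ?_ ?_) ?_
    · have he : {z : ℝ × ℝ | z.1 = 0} = ({0} : Set ℝ) ×ˢ (univ : Set ℝ) := by
        ext ⟨a, b⟩; simp [eq_comm]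
      rw [he, Measure.volume_eq_prod, Measure.prod_prod]
      simp
    · have he : {z : ℝ × ℝ | z.2 = 0} = (univ : Set ℝ) ×ˢ ({0} : Set ℝ) := by
        ext ⟨a, b⟩; simp [eq_comm]
      rw [he, Measure.volume_eq_prod, Measure.prod_prod]
      simp
    · have hsub : {z : ℝ × ℝ | z.1 = z.2}
          = (LinearMap.ker ((LinearMap.fst ℝ ℝ ℝ) - (LinearMap.snd ℝ ℝ ℝ)) : Set (ℝ × ℝ)) := by
        ext z
        simp [LinearMap.mem_ker, sub_eq_zero]
      rw [hsub]
      apply Measure.addHaar_submodule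
      intro htop
      have h1 : ((1:ℝ), (0:ℝ)) ∈ (⊤ : Submodule ℝ (ℝ × ℝ)) := trivial
      rw [← htop] at h1
      simp [LinearMap.mem_ker] at h1
  filter_upwards [measure_eq_zero_iff_ae_notMem.1 hnull] with z hz
  simp only [mem_union, mem_setOf_eq, not_or] at hz
  obtain ⟨⟨h1, h2⟩, h3⟩ := hz
  simp only [mem_union, mem_univ, iff_true, O1, O2, O3, O4, O5, O6, mem_setOf_eq]
  rcases lt_trichotomy z.1 0 with hz1 | hz1 | hz1 <;>
    rcases lt_trichotomy z.2 0 with hz2 | hz2 | hz2 <;>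
    [skip; skip; skip; skip; skip; skip; skip; skip; skip] <;>
    first
    | (exact absurd hz1 h1)
    | (exact absurd hz2 h2)
    | (rcases lt_or_gt_of_ne (fun he => h3 he) with hlt | hgt <;> tauto)
    | tauto

def kform (z : ℝ × ℝ) : ℝ := max (1 + min 0 z.1 - max 0 z.2 - max 0 (z.1 - z.2)) 0

lemma kform1 (p : ℝ × ℝ) (hp : p ∈ Ioi (0:ℝ) ×ˢ Ioo (0:ℝ) 1) :
    kform (Phi (1,0) (0,1) p) = max (1 - p.1) 0 := by
  simp only [mem_prod, mem_Ioi, mem_Ioo] at hp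
  obtain ⟨h1, h2, h3⟩ := hp
  have hm : p.1 * p.2 < p.1 := by nlinarith
  have hp : 0 < p.1 * p.2 := mul_pos h1 h2
  simp only [Phi, kform]
  norm_num [max_def, min_def]
  split_ifs <;> first | linarith | (exfalso; nlinarith)

lemma kform2 (p : ℝ × ℝ) (hp : p ∈ Ioi (0:ℝ) ×ˢ Ioo (0:ℝ) 1) :
    kform (Phi (0,1) (1,0) p) = max (1 - p.1) 0 := by
  simp only [mem_prod, mem_Ioi, mem_Ioo] at hp
  obtain ⟨h1, h2, h3⟩ := hp
  have hm : p.1 * p.2 < p.1 := by nlinarith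
  have hp : 0 < p.1 * p.2 := mul_pos h1 h2
  simp only [Phi, kform]
  norm_num [max_def, min_def]
  split_ifs <;> first | linarith | (exfalso; nlinarith)

lemma kform3 (p : ℝ × ℝ) (hp : p ∈ Ioi (0:ℝ) ×ˢ Ioo (0:ℝ) 1) :
    kform (Phi (0,1) (-1,-1) p) = max (1 - p.1) 0 := by
  simp only [mem_prod, mem_Ioi, mem_Ioo] at hp
  obtain ⟨h1, h2, h3⟩ := hp
  have hm : p.1 * p.2 < p.1 := by nlinarith
  have hp : 0 < p.1 * p.2 := mul_pos h1 h2
  simp only [Phi, kform]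
  norm_num [max_def, min_def]
  split_ifs <;> first | linarith | (exfalso; nlinarith)

lemma kform4 (p : ℝ × ℝ) (hp : p ∈ Ioi (0:ℝ) ×ˢ Ioo (0:ℝ) 1) :
    kform (Phi (-1,0) (0,-1) p) = max (1 - p.1) 0 := by
  simp only [mem_prod, mem_Ioi, mem_Ioo] at hp
  obtain ⟨h1, h2, h3⟩ := hp
  have hm : p.1 * p.2 < p.1 := by nlinarith
  have hp : 0 < p.1 * p.2 := mul_pos h1 h2
  simp only [Phi, kform]
  norm_num [max_def, min_def]
  split_ifs <;> first | linarith | (exfalso; nlinarith)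

lemma kform5 (p : ℝ × ℝ) (hp : p ∈ Ioi (0:ℝ) ×ˢ Ioo (0:ℝ) 1) :
    kform (Phi (0,-1) (-1,0) p) = max (1 - p.1) 0 := by
  simp only [mem_prod, mem_Ioi, mem_Ioo] at hp
  obtain ⟨h1, h2, h3⟩ := hp
  have hm : p.1 * p.2 < p.1 := by nlinarith
  have hp : 0 < p.1 * p.2 := mul_pos h1 h2
  simp only [Phi, kform]
  norm_num [max_def, min_def]
  split_ifs <;> first | linarith | (exfalso; nlinarith)

lemma kform6 (p : ℝ × ℝ) (hp : p ∈ Ioi (0:ℝ) ×ˢ Ioo (0:ℝ) 1) :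
    kform (Phi (0,-1) (1,1) p) = max (1 - p.1) 0 := by
  simp only [mem_prod, mem_Ioi, mem_Ioo] at hp
  obtain ⟨h1, h2, h3⟩ := hp
  have hm : p.1 * p.2 < p.1 := by nlinarith
  have hp : 0 < p.1 * p.2 := mul_pos h1 h2
  simp only [Phi, kform]
  norm_num [max_def, min_def]
  split_ifs <;> first | linarith | (exfalso; nlinarith)

lemma Jlemma :
    ∫⁻ ξ in Ioi (0:ℝ), ENNReal.ofReal ((max (1 - ξ) 0) ^ 2 / 2) = ENNReal.ofReal (1/6) := by
  have hsplit : Ioi (0:ℝ) = Ioo 0 1 ∪ Ici 1 := by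
    ext x; simp only [mem_Ioi, mem_union, mem_Ioo, mem_Ici]
    constructor
    · intro hx; rcases lt_or_ge x 1 with h | h
      · exact Or.inl ⟨hx, h⟩
      · exact Or.inr h
    · rintro (⟨h, _⟩ | h) <;> linarith
  have hdisj : Disjoint (Ioo (0:ℝ) 1) (Ici 1) := by
    rw [Set.disjoint_left]
    intro x hx hx2
    rw [mem_Ioo] at hx
    rw [mem_Ici] at hx2
    linarith [hx.2]
  rw [hsplit, lintegral_union measurableSet_Ici hdisj]
  have h2 : ∫⁻ ξ in Ici (1:ℝ), ENNReal.ofReal ((max (1 - ξ) 0) ^ 2 / 2) = 0 := by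
    have hz : ∀ ξ ∈ Ici (1:ℝ), ENNReal.ofReal ((max (1 - ξ) 0) ^ 2 / 2) = 0 := by
      intro ξ hξ
      rw [mem_Ici] at hξ
      rw [max_eq_right (by linarith)]
      simp
    rw [setLIntegral_congr_fun measurableSet_Ici hz]
    simp
  have h1 : ∫⁻ ξ in Ioo (0:ℝ) 1, ENNReal.ofReal ((max (1 - ξ) 0) ^ 2 / 2)
      = ENNReal.ofReal (1/6) := by
    have he : ∀ ξ ∈ Ioo (0:ℝ) 1, ENNReal.ofReal ((max (1 - ξ) 0) ^ 2 / 2)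
        = ENNReal.ofReal ((1 - ξ) ^ 2 / 2) := by
      intro ξ hξ
      rw [mem_Ioo] at hξ
      rw [max_eq_left (by linarith [hξ.2])]
    rw [setLIntegral_congr_fun measurableSet_Ioo he]
    have hint : IntegrableOn (fun ξ : ℝ => (1 - ξ) ^ 2 / 2) (Ioo 0 1) volume := by
      have hc : Continuous (fun ξ : ℝ => (1 - ξ) ^ 2 / 2) := by continuity
      exact (hc.integrableOn_Icc (a := 0) (b := 1)).mono_set Ioo_subset_Icc_self
    rw [← ofReal_integral_eq_lintegral_ofReal hint (by
      filter_upwards with ξ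
      positivity)]
    congr 1
    rw [← MeasureTheory.integral_Ioc_eq_integral_Ioo, ← intervalIntegral.integral_of_le
      (by norm_num : (0:ℝ) ≤ 1)]
    have : ∀ ξ : ℝ, (1 - ξ)^2/2 = ξ^2/2 - ξ + 1/2 := by intro ξ; ring
    simp_rw [this]
    rw [intervalIntegral.integral_add (by
        apply IntervalIntegrable.sub
        · exact (continuous_pow 2).intervalIntegrable 0 1 |>.div_const 2
        · exact intervalIntegral.intervalIntegrable_id) (intervalIntegrable_const (c := (1:ℝ)/2)),
      intervalIntegral.integral_sub ((continuous_pow 2).intervalIntegrable 0 1 |>.div_const 2)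
        intervalIntegral.intervalIntegrable_id]
    rw [intervalIntegral.integral_div, integral_pow, integral_id, intervalIntegral.integral_const]
    norm_num
  rw [h1, h2, add_zero]

lemma step1 (T : Set (ℝ × ℝ)) (hT : MeasurableSet T) (g : ℝ × ℝ → ℝ≥0∞) (hg : Measurable g) :
    ∫⁻ p in T ×ˢ T, g (p.1 - p.2)
      = ∫⁻ z, g z * volume (T ∩ {x : ℝ × ℝ | x - z ∈ T}) := by
  have hsub : Measurable fun p : (ℝ × ℝ) × (ℝ × ℝ) => g (p.1 - p.2) :=
    hg.comp (measurable_fst.sub measurable_snd)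
  rw [show (volume : Measure ((ℝ×ℝ) × (ℝ×ℝ))) = (volume : Measure (ℝ×ℝ)).prod volume from
    Measure.volume_eq_prod _ _, ← Measure.prod_restrict]
  rw [lintegral_prod _ hsub.aemeasurable]
  have hinner : ∀ x : ℝ × ℝ, ∫⁻ y in T, g (x - y)
      = ∫⁻ z, T.indicator (1 : (ℝ × ℝ) → ℝ≥0∞) (x - z) * g z := by
    intro x
    rw [← lintegral_indicator hT]
    have mp : MeasurePreserving (fun z : ℝ × ℝ => x - z) volume volume := by
      have h1 := MeasureTheory.Measure.measurePreserving_neg (volume : Measure (ℝ × ℝ))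
      have h2 := MeasureTheory.measurePreserving_add_left (volume : Measure (ℝ × ℝ)) x
      have := h2.comp h1
      simpa [Function.comp_def, sub_eq_add_neg] using this
    have hmz : Measurable fun z : ℝ × ℝ => T.indicator (1 : (ℝ × ℝ) → ℝ≥0∞) (x - z) * g z := by
      have hsm : Measurable fun z : ℝ × ℝ => x - z := measurable_const.sub measurable_id
      exact ((measurable_one.indicator hT).comp hsm).mul hg
    rw [← mp.lintegral_comp hmz]
    apply lintegral_congr
    intro y
    by_cases hy : x - (x - y) ∈ T
    · have hy' : y ∈ T := by simpa using hy
      simp [hy, hy', sub_sub_cancel]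
    · have hy' : y ∉ T := by simpa using hy
      simp [hy, hy', sub_sub_cancel]
  simp_rw [hinner]
  rw [lintegral_lintegral_swap (by
    exact (((measurable_one.indicator hT).comp (measurable_fst.sub measurable_snd)).mul
      (hg.comp measurable_snd)).aemeasurable)]
  apply lintegral_congr
  intro z
  have hmx : Measurable fun x : ℝ × ℝ => T.indicator (1 : (ℝ × ℝ) → ℝ≥0∞) (x - z) := by
    have hsm : Measurable fun x : ℝ × ℝ => x - z := measurable_id.sub measurable_const
    exact (measurable_one.indicator hT).comp hsm
  rw [lintegral_mul_const _ hmx]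
  rw [mul_comm]
  congr 1
  rw [← lintegral_indicator hT]
  have hpt : ∀ x : ℝ × ℝ, T.indicator (fun x => T.indicator (1 : (ℝ × ℝ) → ℝ≥0∞) (x - z)) x
      = (T ∩ {x : ℝ × ℝ | x - z ∈ T}).indicator 1 x := by
    intro x
    by_cases hx : x ∈ T
    · by_cases hxz : x - z ∈ T
      · simp [hx, hxz, indicator_of_mem, Set.mem_inter_iff]
      · simp [hx, hxz, Set.mem_inter_iff]
    · simp [hx, Set.mem_inter_iff]
  simp_rw [hpt]
  have hsm : Measurable fun x : ℝ × ℝ => x - z := measurable_id.sub measurable_const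
  exact lintegral_indicator_one (hT.inter (measurableSet_preimage hsm hT))

abbrev E3 := EuclideanSpace ℝ (Fin 3)

lemma norm_comb_sq (v w : E3) (c d : ℝ) :
    ‖c • v + d • w‖ ^ 2 = c ^ 2 * ‖v‖ ^ 2 + 2 * (c * d) * ⟪v, w⟫ + d ^ 2 * ‖w‖ ^ 2 := by
  rw [norm_add_sq_real, norm_smul, norm_smul, real_inner_smul_left, real_inner_smul_right]
  simp only [Real.norm_eq_abs, mul_pow, sq_abs]
  ring

lemma pair_indep {v w : E3} (h : LinearIndependent ℝ ![v, w]) :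
    ∀ a b : ℝ, a • v + b • w = 0 → a = 0 ∧ b = 0 := by
  rw [linearIndependent_fin2] at h
  obtain ⟨hw, hvw⟩ := h
  simp only [Matrix.cons_val_one, Matrix.head_cons, Matrix.cons_val_zero] at hw hvw
  intro a b hab
  by_cases ha : a = 0
  · subst ha
    simp only [zero_smul, zero_add] at hab
    rcases smul_eq_zero.1 hab with hb | hb
    · exact ⟨rfl, hb⟩
    · exact absurd hb hw
  · exfalso
    apply hvw (-b / a)
    have h1 : a • v = (-b) • w := by
      rw [neg_smul, eq_neg_iff_add_eq_zero]
      linear_combination (norm := module) hab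
    have := congrArg (fun x => (a⁻¹ : ℝ) • x) h1
    simp only [smul_smul, inv_mul_cancel₀ ha, one_smul] at this
    rw [this]
    congr 1
    field_simp
  
lemma strictCS {v w : E3} (hvw : ∀ a b : ℝ, a • v + b • w = 0 → a = 0 ∧ b = 0) :
    (2 * ⟪v, w⟫) ^ 2 < 4 * (‖v‖ ^ 2 * ‖w‖ ^ 2) := by
  have hv : v ≠ 0 := by
    intro hv0
    have := hvw 1 0 (by simp [hv0])
    exact one_ne_zero this.1
  have hvn : 0 < ‖v‖ := norm_pos_iff.2 hv
  have hu : (-⟪v, w⟫) • v + (‖v‖ ^ 2) • w ≠ 0 := by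
    intro h0
    have := (hvw _ _ h0).2
    nlinarith
  have hup : 0 < ‖(-⟪v, w⟫) • v + (‖v‖ ^ 2) • w‖ := norm_pos_iff.2 hu
  have h2 : 0 < ‖(-⟪v, w⟫) • v + (‖v‖ ^ 2) • w‖ ^ 2 := by positivity
  rw [norm_comb_sq] at h2
  nlinarith [hvn]
-- gfun/Ffun/cone_term + main theorem (to be appended after all other pieces)

noncomputable def gfun (v w : E3) (z : ℝ × ℝ) : ℝ≥0∞ :=
  ENNReal.ofReal (1 / ‖z.1 • v + z.2 • w‖)

noncomputable def Ffun (v w : E3) (z : ℝ × ℝ) : ℝ≥0∞ :=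
  gfun v w z * ENNReal.ofReal ((kform z) ^ 2 / 2)

lemma gfun_meas (v w : E3) : Measurable (gfun v w) := by
  have hc : Continuous fun z : ℝ × ℝ => ‖z.1 • v + z.2 • w‖ :=
    ((continuous_fst.smul continuous_const).add (continuous_snd.smul continuous_const)).norm
  exact ENNReal.measurable_ofReal.comp (measurable_const.div hc.measurable)

lemma cone_term (v w : E3) {A B : ℝ × ℝ}
    (hdet : A.1 * B.2 - A.2 * B.1 = 1 ∨ A.1 * B.2 - A.2 * B.1 = -1)
    (n : ℝ → ℝ) (hn : ∀ η, 0 < n η) (hnc : Continuous n)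
    (hK : ∀ p ∈ Ioi (0:ℝ) ×ˢ Ioo (0:ℝ) 1, kform (Phi A B p) = max (1 - p.1) 0)
    (hg : ∀ p ∈ Ioi (0:ℝ) ×ˢ Ioo (0:ℝ) 1,
      ‖(Phi A B p).1 • v + (Phi A B p).2 • w‖ = p.1 * n p.2) :
    ∫⁻ z in Phi A B '' (Ioi (0:ℝ) ×ˢ Ioo (0:ℝ) 1), Ffun v w z
      = ENNReal.ofReal (1/6) * ∫⁻ η in Ioo (0:ℝ) 1, ENNReal.ofReal (1 / n η) := by
  rw [cone_cov hdet]
  have hset : MeasurableSet (Ioi (0:ℝ) ×ˢ Ioo (0:ℝ) 1) :=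
    measurableSet_Ioi.prod measurableSet_Ioo
  have hptw : ∀ p ∈ Ioi (0:ℝ) ×ˢ Ioo (0:ℝ) 1,
      ENNReal.ofReal p.1 * Ffun v w (Phi A B p)
        = ENNReal.ofReal ((max (1 - p.1) 0) ^ 2 / 2) * ENNReal.ofReal (1 / n p.2) := by
    intro p hp
    have h1 : 0 < p.1 := (mem_prod.1 hp).1
    unfold Ffun gfun
    rw [hg p hp, hK p hp, ← mul_assoc, ← ENNReal.ofReal_mul h1.le]
    have he : p.1 * (1 / (p.1 * n p.2)) = 1 / n p.2 := by
      have := (hn p.2).ne'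
      field_simp
    rw [he, mul_comm]
  rw [setLIntegral_congr_fun hset hptw]
  have hu : Measurable fun ξ : ℝ => ENNReal.ofReal ((max (1 - ξ) 0) ^ 2 / 2) := by
    have hc : Continuous fun ξ : ℝ => (max (1 - ξ) 0) ^ 2 / 2 := by continuity
    exact ENNReal.measurable_ofReal.comp hc.measurable
  have hw' : Measurable fun η : ℝ => ENNReal.ofReal (1 / n η) := by
    have hc : Continuous fun η : ℝ => 1 / n η :=
      continuous_const.div hnc fun η => (hn η).ne'
    exact ENNReal.measurable_ofReal.comp hc.measurable
  rw [show (volume : Measure (ℝ × ℝ)) = (volume : Measure ℝ).prod volume from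
    Measure.volume_eq_prod _ _, ← Measure.prod_restrict,
    lintegral_prod_mul hu.aemeasurable hw'.aemeasurable, Jlemma]

end SLPAux

/-- Closed formula for the single layer potential integral over a pair of
identical reference elements, for linearly independent `v, w ∈ ℝ³`. -/
theorem slp_identical_elements_closed_formula (v w : EuclideanSpace ℝ (Fin 3))
    (h : LinearIndependent ℝ ![v, w]) :
    ∫ p in refTri ×ˢ refTri,
        1 / ‖(p.1.1 - p.2.1) • v + (p.1.2 - p.2.2) • w‖
      = (1/3) *
        ((Fanti (‖v‖ ^ 2) (2 * ⟪v, w⟫) (‖w‖ ^ 2) 1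
            - Fanti (‖v‖ ^ 2) (2 * ⟪v, w⟫) (‖w‖ ^ 2) 0)
          + (Fanti (‖w‖ ^ 2) (2 * ⟪w, v⟫) (‖v‖ ^ 2) 1
            - Fanti (‖w‖ ^ 2) (2 * ⟪w, v⟫) (‖v‖ ^ 2) 0)
          + (Fanti (‖v + w‖ ^ 2) (-2 * ⟪v + w, w⟫) (‖w‖ ^ 2) 1
            - Fanti (‖v + w‖ ^ 2) (-2 * ⟪v + w, w⟫) (‖w‖ ^ 2) 0)) := by
  have hpair := pair_indep h
  have hpair21 : ∀ a b : ℝ, a • w + b • v = 0 → a = 0 ∧ b = 0 := by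
    intro a b hab
    have := hpair b a (by rw [← hab]; abel)
    exact ⟨this.2, this.1⟩
  have hpair3 : ∀ a b : ℝ, a • (v + w) + b • w = 0 → a = 0 ∧ b = 0 := by
    intro a b hab
    have h0 : a • v + (a + b) • w = 0 := by
      rw [← hab]; module
    have := hpair a (a + b) h0
    exact ⟨this.1, by linarith [this.1, this.2]⟩
  have hv0 : v ≠ 0 := fun h0 => one_ne_zero (hpair 1 0 (by simp [h0])).1
  have hw0 : w ≠ 0 := fun h0 => one_ne_zero (hpair 0 1 (by simp [h0])).2
  have hvw0 : v + w ≠ 0 := fun h0 => one_ne_zero (hpair3 1 0 (by simp [h0])).1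
  have hα1 : (0:ℝ) < ‖v‖ ^ 2 := pow_pos (norm_pos_iff.2 hv0) 2
  have hα2 : (0:ℝ) < ‖w‖ ^ 2 := pow_pos (norm_pos_iff.2 hw0) 2
  have hα3 : (0:ℝ) < ‖v + w‖ ^ 2 := pow_pos (norm_pos_iff.2 hvw0) 2
  have hd1 : (2 * ⟪v, w⟫) ^ 2 < 4 * ‖v‖ ^ 2 * ‖w‖ ^ 2 := by
    have := strictCS hpair; nlinarith [this]
  have hd2 : (2 * ⟪w, v⟫) ^ 2 < 4 * ‖w‖ ^ 2 * ‖v‖ ^ 2 := by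
    have := strictCS hpair21; nlinarith [this]
  have hd3 : (-2 * ⟪v + w, w⟫) ^ 2 < 4 * ‖v + w‖ ^ 2 * ‖w‖ ^ 2 := by
    have := strictCS hpair3; nlinarith [this]
  -- the three direction-norm functions
  set n₁ : ℝ → ℝ := fun η => ‖v + η • w‖ with hn₁def
  set n₂ : ℝ → ℝ := fun η => ‖η • v + w‖ with hn₂def
  set n₃ : ℝ → ℝ := fun η => ‖η • v + (η - 1) • w‖ with hn₃def
  have hn₁ : ∀ η, 0 < n₁ η := by
    intro η
    apply norm_pos_iff.2
    intro h0
    exact one_ne_zero (hpair 1 η (by simpa using h0)).1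
  have hn₂ : ∀ η, 0 < n₂ η := by
    intro η
    apply norm_pos_iff.2
    intro h0
    exact one_ne_zero (hpair η 1 (by simpa using h0)).2
  have hn₃ : ∀ η, 0 < n₃ η := by
    intro η
    apply norm_pos_iff.2
    intro h0
    have := hpair η (η - 1) (by simpa using h0)
    linarith [this.1, this.2]
  have hnc₁ : Continuous n₁ :=
    (continuous_const.add (continuous_id.smul continuous_const)).norm
  have hnc₂ : Continuous n₂ :=
    ((continuous_id.smul continuous_const).add continuous_const).norm
  have hnc₃ : Continuous n₃ :=
    ((continuous_id.smul continuous_const).add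
      ((continuous_id.sub continuous_const).smul continuous_const)).norm
  -- the three 1D lintegrals
  have hW₂ : ∫⁻ η in Ioo (0:ℝ) 1, ENNReal.ofReal (1 / n₂ η)
      = ENNReal.ofReal (Fanti (‖v‖ ^ 2) (2 * ⟪v, w⟫) (‖w‖ ^ 2) 1
          - Fanti (‖v‖ ^ 2) (2 * ⟪v, w⟫) (‖w‖ ^ 2) 0) := by
    rw [← lintegral_one_div_sqrtQ hα1 hd1]
    apply setLIntegral_congr_fun measurableSet_Ioo
    intro η _
    congr 1
    rw [hn₂def]
    simp only
    rw [← Real.sqrt_sq (norm_nonneg (η • v + w))]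
    congr 1
    rw [show η • v + w = η • v + (1:ℝ) • w by rw [one_smul], norm_comb_sq]
    ring
  have hW₁ : ∫⁻ η in Ioo (0:ℝ) 1, ENNReal.ofReal (1 / n₁ η)
      = ENNReal.ofReal (Fanti (‖w‖ ^ 2) (2 * ⟪w, v⟫) (‖v‖ ^ 2) 1
          - Fanti (‖w‖ ^ 2) (2 * ⟪w, v⟫) (‖v‖ ^ 2) 0) := by
    rw [← lintegral_one_div_sqrtQ hα2 hd2]
    apply setLIntegral_congr_fun measurableSet_Ioo
    intro η _
    congr 1
    rw [hn₁def]
    simp only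
    rw [← Real.sqrt_sq (norm_nonneg (v + η • w))]
    congr 1
    rw [show v + η • w = (1:ℝ) • v + η • w by rw [one_smul], norm_comb_sq,
      real_inner_comm v w]
    ring
  have hW₃ : ∫⁻ η in Ioo (0:ℝ) 1, ENNReal.ofReal (1 / n₃ η)
      = ENNReal.ofReal (Fanti (‖v + w‖ ^ 2) (-2 * ⟪v + w, w⟫) (‖w‖ ^ 2) 1
          - Fanti (‖v + w‖ ^ 2) (-2 * ⟪v + w, w⟫) (‖w‖ ^ 2) 0) := by
    rw [← lintegral_one_div_sqrtQ hα3 hd3]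
    apply setLIntegral_congr_fun measurableSet_Ioo
    intro η _
    congr 1
    rw [hn₃def]
    simp only
    rw [← Real.sqrt_sq (norm_nonneg (η • v + (η - 1) • w))]
    congr 1
    rw [norm_comb_sq, norm_add_sq_real, inner_add_left, real_inner_self_eq_norm_sq]
    ring
  -- nonnegativity of the Fanti differences
  have hnn1 : 0 ≤ Fanti (‖v‖ ^ 2) (2 * ⟪v, w⟫) (‖w‖ ^ 2) 1
      - Fanti (‖v‖ ^ 2) (2 * ⟪v, w⟫) (‖w‖ ^ 2) 0 := Fanti_sub_nonneg hα1 hd1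
  have hnn2 : 0 ≤ Fanti (‖w‖ ^ 2) (2 * ⟪w, v⟫) (‖v‖ ^ 2) 1
      - Fanti (‖w‖ ^ 2) (2 * ⟪w, v⟫) (‖v‖ ^ 2) 0 := Fanti_sub_nonneg hα2 hd2
  have hnn3 : 0 ≤ Fanti (‖v + w‖ ^ 2) (-2 * ⟪v + w, w⟫) (‖w‖ ^ 2) 1
      - Fanti (‖v + w‖ ^ 2) (-2 * ⟪v + w, w⟫) (‖w‖ ^ 2) 0 := Fanti_sub_nonneg hα3 hd3
  -- measurability
  have hT : MeasurableSet refTri := by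
    have he : refTri = ({p : ℝ × ℝ | 0 < p.2} ∩ {p | p.2 < p.1} ∩ {p | p.1 < 1}) := by
      ext p; simp [refTri, and_assoc]
    rw [he]
    exact ((measurableSet_lt measurable_const measurable_snd).inter
      (measurableSet_lt measurable_snd measurable_fst)).inter
      (measurableSet_lt measurable_fst measurable_const)
  have hO1 : MeasurableSet O1 :=
    (measurableSet_lt measurable_const measurable_snd).inter
      (measurableSet_lt measurable_snd measurable_fst)
  have hO2 : MeasurableSet O2 :=
    (measurableSet_lt measurable_const measurable_fst).inter
      (measurableSet_lt measurable_fst measurable_snd)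
  have hO3 : MeasurableSet O3 :=
    (measurableSet_lt measurable_fst measurable_const).inter
      (measurableSet_lt measurable_const measurable_snd)
  have hO4 : MeasurableSet O4 :=
    (measurableSet_lt measurable_fst measurable_snd).inter
      (measurableSet_lt measurable_snd measurable_const)
  have hO5 : MeasurableSet O5 :=
    (measurableSet_lt measurable_snd measurable_fst).inter
      (measurableSet_lt measurable_fst measurable_const)
  have hO6 : MeasurableSet O6 :=
    (measurableSet_lt measurable_snd measurable_const).inter
      (measurableSet_lt measurable_const measurable_fst)
  -- disjointness
  have d12 : Disjoint O1 O2 := by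
    rw [Set.disjoint_left]; rintro z ⟨a, b⟩ ⟨c, d⟩; linarith
  have d13 : Disjoint O1 O3 := by
    rw [Set.disjoint_left]; rintro z ⟨a, b⟩ ⟨c, d⟩; linarith
  have d23 : Disjoint O2 O3 := by
    rw [Set.disjoint_left]; rintro z ⟨a, b⟩ ⟨c, d⟩; linarith
  have d14 : Disjoint O1 O4 := by
    rw [Set.disjoint_left]; rintro z ⟨a, b⟩ ⟨c, d⟩; linarith
  have d24 : Disjoint O2 O4 := by
    rw [Set.disjoint_left]; rintro z ⟨a, b⟩ ⟨c, d⟩; linarith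
  have d34 : Disjoint O3 O4 := by
    rw [Set.disjoint_left]; rintro z ⟨a, b⟩ ⟨c, d⟩; linarith
  have d15 : Disjoint O1 O5 := by
    rw [Set.disjoint_left]; rintro z ⟨a, b⟩ ⟨c, d⟩; linarith
  have d25 : Disjoint O2 O5 := by
    rw [Set.disjoint_left]; rintro z ⟨a, b⟩ ⟨c, d⟩; linarith
  have d35 : Disjoint O3 O5 := by
    rw [Set.disjoint_left]; rintro z ⟨a, b⟩ ⟨c, d⟩; linarith
  have d45 : Disjoint O4 O5 := by
    rw [Set.disjoint_left]; rintro z ⟨a, b⟩ ⟨c, d⟩; linarith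
  have d16 : Disjoint O1 O6 := by
    rw [Set.disjoint_left]; rintro z ⟨a, b⟩ ⟨c, d⟩; linarith
  have d26 : Disjoint O2 O6 := by
    rw [Set.disjoint_left]; rintro z ⟨a, b⟩ ⟨c, d⟩; linarith
  have d36 : Disjoint O3 O6 := by
    rw [Set.disjoint_left]; rintro z ⟨a, b⟩ ⟨c, d⟩; linarith
  have d46 : Disjoint O4 O6 := by
    rw [Set.disjoint_left]; rintro z ⟨a, b⟩ ⟨c, d⟩; linarith
  have d56 : Disjoint O5 O6 := by
    rw [Set.disjoint_left]; rintro z ⟨a, b⟩ ⟨c, d⟩; linarith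
  -- the six cone evaluations
  have hc1 : ∫⁻ z in O1, Ffun v w z
      = ENNReal.ofReal (1/6) * ∫⁻ η in Ioo (0:ℝ) 1, ENNReal.ofReal (1 / n₁ η) := by
    rw [← imageO1]
    refine cone_term v w (Or.inl (by norm_num)) n₁ hn₁ hnc₁ kform1 ?_
    intro p hp
    have h1 : 0 < p.1 := (mem_prod.1 hp).1
    simp only [Phi]
    rw [show ((p.1 * (1,0).1 + p.1 * p.2 * (0,1).1) • v
      + (p.1 * (1,0).2 + p.1 * p.2 * (0,1).2) • w : E3) = p.1 • (v + p.2 • w) by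
        norm_num; module]
    rw [norm_smul, Real.norm_eq_abs, abs_of_pos h1, hn₁def]
  have hc2 : ∫⁻ z in O2, Ffun v w z
      = ENNReal.ofReal (1/6) * ∫⁻ η in Ioo (0:ℝ) 1, ENNReal.ofReal (1 / n₂ η) := by
    rw [← imageO2]
    refine cone_term v w (Or.inr (by norm_num)) n₂ hn₂ hnc₂ kform2 ?_
    intro p hp
    have h1 : 0 < p.1 := (mem_prod.1 hp).1
    simp only [Phi]
    rw [show ((p.1 * (0,1).1 + p.1 * p.2 * (1,0).1) • v
      + (p.1 * (0,1).2 + p.1 * p.2 * (1,0).2) • w : E3) = p.1 • (p.2 • v + w) by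
        norm_num; module]
    rw [norm_smul, Real.norm_eq_abs, abs_of_pos h1, hn₂def]
  have hc3 : ∫⁻ z in O3, Ffun v w z
      = ENNReal.ofReal (1/6) * ∫⁻ η in Ioo (0:ℝ) 1, ENNReal.ofReal (1 / n₃ η) := by
    rw [← imageO3]
    refine cone_term v w (Or.inl (by norm_num)) n₃ hn₃ hnc₃ kform3 ?_
    intro p hp
    have h1 : 0 < p.1 := (mem_prod.1 hp).1
    simp only [Phi]
    rw [show ((p.1 * (0,1).1 + p.1 * p.2 * (-1,-1).1) • v
      + (p.1 * (0,1).2 + p.1 * p.2 * (-1,-1).2) • w : E3)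
        = (-p.1) • (p.2 • v + (p.2 - 1) • w) by norm_num; module]
    rw [norm_smul, Real.norm_eq_abs, abs_neg, abs_of_pos h1, hn₃def]
  have hc4 : ∫⁻ z in O4, Ffun v w z
      = ENNReal.ofReal (1/6) * ∫⁻ η in Ioo (0:ℝ) 1, ENNReal.ofReal (1 / n₁ η) := by
    rw [← imageO4]
    refine cone_term v w (Or.inl (by norm_num)) n₁ hn₁ hnc₁ kform4 ?_
    intro p hp
    have h1 : 0 < p.1 := (mem_prod.1 hp).1
    simp only [Phi]
    rw [show ((p.1 * (-1,0).1 + p.1 * p.2 * (0,-1).1) • v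
      + (p.1 * (-1,0).2 + p.1 * p.2 * (0,-1).2) • w : E3)
        = (-p.1) • (v + p.2 • w) by norm_num; module]
    rw [norm_smul, Real.norm_eq_abs, abs_neg, abs_of_pos h1, hn₁def]
  have hc5 : ∫⁻ z in O5, Ffun v w z
      = ENNReal.ofReal (1/6) * ∫⁻ η in Ioo (0:ℝ) 1, ENNReal.ofReal (1 / n₂ η) := by
    rw [← imageO5]
    refine cone_term v w (Or.inr (by norm_num)) n₂ hn₂ hnc₂ kform5 ?_
    intro p hp
    have h1 : 0 < p.1 := (mem_prod.1 hp).1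
    simp only [Phi]
    rw [show ((p.1 * (0,-1).1 + p.1 * p.2 * (-1,0).1) • v
      + (p.1 * (0,-1).2 + p.1 * p.2 * (-1,0).2) • w : E3)
        = (-p.1) • (p.2 • v + w) by norm_num; module]
    rw [norm_smul, Real.norm_eq_abs, abs_neg, abs_of_pos h1, hn₂def]
  have hc6 : ∫⁻ z in O6, Ffun v w z
      = ENNReal.ofReal (1/6) * ∫⁻ η in Ioo (0:ℝ) 1, ENNReal.ofReal (1 / n₃ η) := by
    rw [← imageO6]
    refine cone_term v w (Or.inl (by norm_num)) n₃ hn₃ hnc₃ kform6 ?_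
    intro p hp
    have h1 : 0 < p.1 := (mem_prod.1 hp).1
    simp only [Phi]
    rw [show ((p.1 * (0,-1).1 + p.1 * p.2 * (1,1).1) • v
      + (p.1 * (0,-1).2 + p.1 * p.2 * (1,1).2) • w : E3)
        = p.1 • (p.2 • v + (p.2 - 1) • w) by norm_num; module]
    rw [norm_smul, Real.norm_eq_abs, abs_of_pos h1, hn₃def]
  have hsum : ∀ A B C : ℝ, 0 ≤ A → 0 ≤ B → 0 ≤ C →
      ENNReal.ofReal (1/6) * ENNReal.ofReal A + ENNReal.ofReal (1/6) * ENNReal.ofReal B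
        + ENNReal.ofReal (1/6) * ENNReal.ofReal C + ENNReal.ofReal (1/6) * ENNReal.ofReal A
        + ENNReal.ofReal (1/6) * ENNReal.ofReal B + ENNReal.ofReal (1/6) * ENNReal.ofReal C
      = ENNReal.ofReal ((1/6) * (2 * B + 2 * A + 2 * C)) := by
    intro A B C hA hB hC
    have h6 : (0:ℝ) ≤ 1/6 := by norm_num
    simp only [← ENNReal.ofReal_mul h6]
    have h1 : (0:ℝ) ≤ 1/6 * A := by linarith
    have h2 : (0:ℝ) ≤ 1/6 * B := by linarith
    have h3 : (0:ℝ) ≤ 1/6 * C := by linarith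
    rw [← ENNReal.ofReal_add h1 h2, ← ENNReal.ofReal_add (add_nonneg h1 h2) h3,
      ← ENNReal.ofReal_add (add_nonneg (add_nonneg h1 h2) h3) h1,
      ← ENNReal.ofReal_add (add_nonneg (add_nonneg (add_nonneg h1 h2) h3) h1) h2,
      ← ENNReal.ofReal_add (add_nonneg (add_nonneg (add_nonneg (add_nonneg h1 h2) h3) h1) h2) h3]
    congr 1
    ring
  -- main lintegral computation
  have hL : ∫⁻ p in refTri ×ˢ refTri,
        ENNReal.ofReal (1 / ‖(p.1.1 - p.2.1) • v + (p.1.2 - p.2.2) • w‖)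
      = ENNReal.ofReal ((1/6) * (2 * (Fanti (‖v‖ ^ 2) (2 * ⟪v, w⟫) (‖w‖ ^ 2) 1
            - Fanti (‖v‖ ^ 2) (2 * ⟪v, w⟫) (‖w‖ ^ 2) 0)
          + 2 * (Fanti (‖w‖ ^ 2) (2 * ⟪w, v⟫) (‖v‖ ^ 2) 1
            - Fanti (‖w‖ ^ 2) (2 * ⟪w, v⟫) (‖v‖ ^ 2) 0)
          + 2 * (Fanti (‖v + w‖ ^ 2) (-2 * ⟪v + w, w⟫) (‖w‖ ^ 2) 1
            - Fanti (‖v + w‖ ^ 2) (-2 * ⟪v + w, w⟫) (‖w‖ ^ 2) 0))) := by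
    have e1 : ∫⁻ p in refTri ×ˢ refTri,
          ENNReal.ofReal (1 / ‖(p.1.1 - p.2.1) • v + (p.1.2 - p.2.2) • w‖)
        = ∫⁻ p in refTri ×ˢ refTri, gfun v w (p.1 - p.2) := by
      apply lintegral_congr
      intro p
      simp only [gfun, Prod.fst_sub, Prod.snd_sub]
    rw [e1, step1 refTri hT (gfun v w) (gfun_meas v w)]
    have e2 : ∫⁻ z, gfun v w z * volume (refTri ∩ {x : ℝ × ℝ | x - z ∈ refTri})
        = ∫⁻ z, Ffun v w z := by
      apply lintegral_congr
      intro z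
      rw [vol_K z]
      rfl
    rw [e2, ← setLIntegral_univ (Ffun v w), ← setLIntegral_congr cover_ae,
      lintegral_union hO6 ((((d16.union_left d26).union_left d36).union_left d46).union_left d56),
      lintegral_union hO5 (((d15.union_left d25).union_left d35).union_left d45),
      lintegral_union hO4 ((d14.union_left d24).union_left d34),
      lintegral_union hO3 (d13.union_left d23),
      lintegral_union hO2 d12,
      hc1, hc2, hc3, hc4, hc5, hc6, hW₁, hW₂, hW₃]
    exact hsum _ _ _ hnn2 hnn1 hnn3
  -- convert Bochner integral to lintegral
  have hcont : Continuous fun p : (ℝ × ℝ) × (ℝ × ℝ) =>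
      ‖(p.1.1 - p.2.1) • v + (p.1.2 - p.2.2) • w‖ := by
    apply Continuous.norm
    exact ((continuous_fst.fst.sub continuous_snd.fst).smul continuous_const).add
      ((continuous_fst.snd.sub continuous_snd.snd).smul continuous_const)
  rw [integral_eq_lintegral_of_nonneg_ae
    (f := fun p : (ℝ × ℝ) × (ℝ × ℝ) => 1 / ‖(p.1.1 - p.2.1) • v + (p.1.2 - p.2.2) • w‖) (Filter.Eventually.of_forall fun p => by positivity)
    ((measurable_const.div hcont.measurable)).aestronglyMeasurable]
  rw [hL, ENNReal.toReal_ofReal (by nlinarith)]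
  ring
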